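/- For the d-dimensional Dirichlet D-norm generator constant m(α) = (1/α) E(max_{1≤i≤d} V_i) with V_1,...,V_d i.i.d. Gamma(α), one has lim_{α→0⁺} m(α) = d and lim_{α→∞} m(α) = 1. -/

import Mathlib

/-!
Let `M = max Vᵢ`, and recall `E V = α`, `Var V = α`. As `α → ∞`, `V₁ ≤ M ≤ α + ∑ |Vᵢ - α|` and
`E |V - α| ≤ √(Var V) = √α` squeeze `E M / α` between `1` and `1 + d / √α`.
As `α → 0⁺`, `M ≤ ∑ Vᵢ` gives `m(α) ≤ d`. Conversely every non-maximal `Vⱼ` is at most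
`√(Vⱼ M)`, so `M ≥ ∑ Vᵢ - ∑_{i ≠ j} √(Vᵢ Vⱼ)`, and independence gives
`E M ≥ d α - d (d - 1) (E √V)²` with `E √V = Γ(α + 1/2) / Γ(α) = α Γ(α + 1/2) / Γ(α + 1)`,
so that `(E √V)² / α → 0`.
-/

open MeasureTheory ProbabilityTheory Filter

/-- The generator constant of the d-dimensional Dirichlet D-norm,
`m(α) = (1/α) E (max_i Vᵢ)` with `V₁,...,V_d` i.i.d. Gamma(α). -/
noncomputable def dirichletGeneratorConstant (d : ℕ) (α : ℝ) : ℝ :=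
  (1 / α) * ∫ v : Fin d → ℝ, ⨆ i, v i ∂(Measure.pi fun _ => gammaMeasure α 1)

open Real Set Topology

section GammaMoments

variable {α p : ℝ}

lemma ae_nonneg_gammaMeasure (α r : ℝ) : ∀ᵐ x ∂gammaMeasure α r, 0 ≤ x := by
  have hneg : {x : ℝ | ¬0 ≤ x} = Iio 0 := by ext; simp
  rw [ae_iff, hneg, gammaMeasure, withDensity_apply _ measurableSet_Iio]
  exact lintegral_gammaPDF_of_nonpos le_rfl

lemma gammaPDF_toReal_smul_rpow (hα : 0 < α) (hp : 0 < p) (x : ℝ) :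
    (gammaPDF α 1 x).toReal • x ^ p =
      (Ioi 0).indicator (fun x => (Gamma α)⁻¹ * (exp (-x) * x ^ (α + p - 1))) x := by
  rw [gammaPDF, ENNReal.toReal_ofReal (gammaPDFReal_nonneg hα one_pos x), smul_eq_mul]
  rcases lt_trichotomy x 0 with hx | rfl | hx
  · simp [gammaPDFReal, hx.not_ge, hx.not_gt]
  · simp [zero_rpow hp.ne']
  · rw [indicator_of_mem (mem_Ioi.2 hx), gammaPDFReal, if_pos hx.le, one_rpow, one_mul,
      show α + p - 1 = (α - 1) + p by ring, rpow_add hx]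
    ring

lemma measurable_gammaPDF (a r : ℝ) : Measurable (gammaPDF a r) :=
  (measurable_gammaPDFReal a r).ennreal_ofReal

lemma integrable_rpow_gammaMeasure (hα : 0 < α) (hp : 0 < p) :
    Integrable (fun x => x ^ p) (gammaMeasure α 1) := by
  rw [gammaMeasure, integrable_withDensity_iff_integrable_smul' (measurable_gammaPDF α 1)
    (ae_of_all _ fun _ => ENNReal.ofReal_lt_top)]
  simp_rw [gammaPDF_toReal_smul_rpow hα hp]
  exact IntegrableOn.integrable_indicator
    ((Real.GammaIntegral_convergent (by linarith)).const_mul _) measurableSet_Ioi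

lemma integral_rpow_gammaMeasure (hα : 0 < α) (hp : 0 < p) :
    ∫ x, x ^ p ∂gammaMeasure α 1 = Gamma (α + p) / Gamma α := by
  rw [gammaMeasure, integral_withDensity_eq_integral_toReal_smul (measurable_gammaPDF α 1)
    (ae_of_all _ fun _ => ENNReal.ofReal_lt_top)]
  simp_rw [gammaPDF_toReal_smul_rpow hα hp]
  rw [integral_indicator measurableSet_Ioi, integral_const_mul,
    ← Gamma_eq_integral (by linarith), inv_mul_eq_div]

lemma integrable_id_gammaMeasure (hα : 0 < α) : Integrable (fun x => x) (gammaMeasure α 1) := by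
  simpa using integrable_rpow_gammaMeasure hα one_pos

lemma integral_id_gammaMeasure (hα : 0 < α) : ∫ x, x ∂gammaMeasure α 1 = α := by
  have h := integral_rpow_gammaMeasure hα one_pos
  simp only [rpow_one] at h
  rw [h, Gamma_add_one hα.ne', mul_div_assoc, div_self (Gamma_pos_of_pos hα).ne', mul_one]

lemma integrable_sq_gammaMeasure (hα : 0 < α) :
    Integrable (fun x => x ^ 2) (gammaMeasure α 1) := by
  simpa only [rpow_two] using integrable_rpow_gammaMeasure hα two_pos

lemma integral_sq_gammaMeasure (hα : 0 < α) : ∫ x, x ^ 2 ∂gammaMeasure α 1 = α * (α + 1) := by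
  have h := integral_rpow_gammaMeasure hα two_pos
  simp only [rpow_two] at h
  rw [h, show α + 2 = α + 1 + 1 by ring, Gamma_add_one (by linarith), Gamma_add_one hα.ne']
  field_simp [(Gamma_pos_of_pos hα).ne']

lemma integrable_sqrt_gammaMeasure (hα : 0 < α) : Integrable sqrt (gammaMeasure α 1) := by
  simpa only [← sqrt_eq_rpow] using integrable_rpow_gammaMeasure hα one_half_pos

lemma integral_sqrt_gammaMeasure (hα : 0 < α) :
    ∫ x, √x ∂gammaMeasure α 1 = Gamma (α + 1 / 2) / Gamma α := by
  simpa only [← sqrt_eq_rpow] using integral_rpow_gammaMeasure hα one_half_pos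

lemma integrable_sub_sq_gammaMeasure (hα : 0 < α) :
    Integrable (fun x => (x - α) ^ 2) (gammaMeasure α 1) := by
  have := isProbabilityMeasure_gammaMeasure hα one_pos
  have hexpand : (fun x : ℝ => (x - α) ^ 2) = fun x => x ^ 2 - 2 * α * x + α ^ 2 := by
    ext; ring
  rw [hexpand]
  exact ((integrable_sq_gammaMeasure hα).sub
    ((integrable_id_gammaMeasure hα).const_mul (2 * α))).add (integrable_const _)

lemma integral_sub_sq_gammaMeasure (hα : 0 < α) :
    ∫ x, (x - α) ^ 2 ∂gammaMeasure α 1 = α := by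
  have := isProbabilityMeasure_gammaMeasure hα one_pos
  have hlin := (integrable_id_gammaMeasure hα).const_mul (2 * α)
  have hexpand : (fun x : ℝ => (x - α) ^ 2) = fun x => x ^ 2 - 2 * α * x + α ^ 2 := by
    ext; ring
  rw [hexpand, integral_add (f := fun x => x ^ 2 - 2 * α * x)
      ((integrable_sq_gammaMeasure hα).sub hlin) (integrable_const _),
    integral_sub (integrable_sq_gammaMeasure hα) hlin, integral_const_mul,
    integral_sq_gammaMeasure hα, integral_id_gammaMeasure hα, integral_const]
  simp only [probReal_univ, smul_eq_mul]
  ring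

lemma integral_abs_sub_le_sqrt_gammaMeasure (hα : 0 < α) :
    ∫ x, |x - α| ∂gammaMeasure α 1 ≤ √α := by
  have := isProbabilityMeasure_gammaMeasure hα one_pos
  have hs : 0 < √α := sqrt_pos.2 hα
  have hsq : √α ^ 2 = α := sq_sqrt hα.le
  have hvar := (integrable_id_gammaMeasure hα).sub (integrable_const α)
  -- AM-GM: `|t| ≤ t² / (2s) + s / 2` with `s = √α`
  have hamgm : ∀ x : ℝ, |x - α| ≤ (x - α) ^ 2 / (2 * √α) + √α / 2 := fun x => by
    rw [div_add_div _ _ (by positivity) two_ne_zero, le_div_iff₀ (by positivity)]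
    nlinarith [sq_nonneg (|x - α| - √α), sq_abs (x - α)]
  calc ∫ x, |x - α| ∂gammaMeasure α 1
      ≤ ∫ x, ((x - α) ^ 2 / (2 * √α) + √α / 2) ∂gammaMeasure α 1 := by
        refine integral_mono hvar.abs
          (((integrable_sub_sq_gammaMeasure hα).div_const _).add (integrable_const _)) hamgm
    _ = √α := by
        rw [integral_add ((integrable_sub_sq_gammaMeasure hα).div_const _) (integrable_const _),
          integral_div, integral_sub_sq_gammaMeasure hα, integral_const]
        simp only [probReal_univ, smul_eq_mul]
        field_simp
        linarith

end GammaMoments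

section MaxOfFamily

variable {ι : Type*} [Fintype ι]

lemma iSup_le_sum_of_nonneg {v : ι → ℝ} (hv : ∀ i, 0 ≤ v i) : ⨆ i, v i ≤ ∑ i, v i :=
  Real.iSup_le (fun i => Finset.single_le_sum (fun j _ => hv j) (Finset.mem_univ i))
    (Finset.sum_nonneg fun j _ => hv j)

lemma iSup_le_add_sum_abs_sub [Nonempty ι] (v : ι → ℝ) (c : ℝ) :
    ⨆ i, v i ≤ c + ∑ i, |v i - c| :=
  ciSup_le fun i => by
    have hi : |v i - c| ≤ ∑ j, |v j - c| :=
      Finset.single_le_sum (f := fun j => |v j - c|) (fun j _ => abs_nonneg _) (Finset.mem_univ i)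
    linarith [le_abs_self (v i - c)]

lemma sum_sub_sum_sqrt_mul_sqrt_le_iSup [Nonempty ι] [DecidableEq ι] {v : ι → ℝ}
    (hv : ∀ i, 0 ≤ v i) :
    ∑ i, v i - ∑ i, ∑ j ∈ Finset.univ.erase i, √(v i) * √(v j) ≤ ⨆ i, v i := by
  obtain ⟨k, hk⟩ := Finite.exists_max v
  have hsplit := Finset.add_sum_erase Finset.univ v (Finset.mem_univ k)
  have hrest : ∑ j ∈ Finset.univ.erase k, v j ≤ ∑ j ∈ Finset.univ.erase k, √(v k) * √(v j) :=
    Finset.sum_le_sum fun j _ => by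
      calc v j = √(v j) * √(v j) := (mul_self_sqrt (hv j)).symm
        _ ≤ √(v k) * √(v j) := by gcongr; exact hk j
  have hpairs : ∑ j ∈ Finset.univ.erase k, √(v k) * √(v j)
      ≤ ∑ i, ∑ j ∈ Finset.univ.erase i, √(v i) * √(v j) :=
    Finset.single_le_sum (f := fun i => ∑ j ∈ Finset.univ.erase i, √(v i) * √(v j))
      (fun i _ => Finset.sum_nonneg fun j _ => by positivity) (Finset.mem_univ k)
  linarith [le_ciSup (Set.finite_range v).bddAbove k]

end MaxOfFamily

section IIDProduct

variable {ι : Type*} [Fintype ι]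

lemma indepFun_eval_pi {X : Type*} [MeasurableSpace X] {μ : Measure X} [IsProbabilityMeasure μ]
    {i j : ι} (hij : i ≠ j) :
    IndepFun (fun v : ι → X => v i) (fun v => v j) (Measure.pi fun _ => μ) :=
  (iIndepFun_pi (X := fun _ => id) fun _ => aemeasurable_id).indepFun hij

lemma integrable_comp_eval_mul_comp_eval_pi {X : Type*} [MeasurableSpace X] {μ : Measure X}
    [IsProbabilityMeasure μ] {f g : X → ℝ} (hf : Integrable f μ) (hg : Integrable g μ)
    {i j : ι} (hij : i ≠ j) :
    Integrable (fun v : ι → X => f (v i) * g (v j)) (Measure.pi fun _ => μ) := by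
  have hind := (indepFun_eval_pi (μ := μ) hij).comp₀ (measurable_pi_apply i).aemeasurable
    (measurable_pi_apply j).aemeasurable
    (by rw [(measurePreserving_eval _ i).map_eq]; exact hf.aemeasurable)
    (by rw [(measurePreserving_eval _ j).map_eq]; exact hg.aemeasurable)
  exact hind.integrable_mul (integrable_comp_eval hf) (integrable_comp_eval hg)

lemma integral_comp_eval_mul_comp_eval_pi {X : Type*} [MeasurableSpace X] {μ : Measure X}
    [IsProbabilityMeasure μ] {f g : X → ℝ} (hf : AEStronglyMeasurable f μ)
    (hg : AEStronglyMeasurable g μ) {i j : ι} (hij : i ≠ j) :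
    ∫ v : ι → X, f (v i) * g (v j) ∂(Measure.pi fun _ => μ) = (∫ x, f x ∂μ) * ∫ x, g x ∂μ := by
  rw [(indepFun_eval_pi hij).integral_fun_comp_mul_comp (measurable_pi_apply i).aemeasurable
    (measurable_pi_apply j).aemeasurable
    (by rwa [(measurePreserving_eval _ i).map_eq]) (by rwa [(measurePreserving_eval _ j).map_eq]),
    integral_comp_eval hf, integral_comp_eval hg]

variable {μ : Measure ℝ} [IsProbabilityMeasure μ]

lemma ae_forall_nonneg_pi (h0 : ∀ᵐ x ∂μ, 0 ≤ x) :
    ∀ᵐ v ∂(Measure.pi fun _ : ι => μ), ∀ i, 0 ≤ v i :=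
  ae_all_iff.2 fun i => (measurePreserving_eval _ i).quasiMeasurePreserving.ae h0

lemma integrable_iSup_pi (hμ : Integrable id μ) (h0 : ∀ᵐ x ∂μ, 0 ≤ x) :
    Integrable (fun v : ι → ℝ => ⨆ i, v i) (Measure.pi fun _ => μ) := by
  refine (integrable_finsetSum Finset.univ fun i _ =>
    integrable_eval (μ := fun _ : ι => μ) (i := i) hμ).mono'
    (Measurable.iSup fun i => measurable_pi_apply i).aestronglyMeasurable ?_
  filter_upwards [ae_forall_nonneg_pi h0] with v hv
  rw [norm_of_nonneg (Real.iSup_nonneg hv)]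
  exact iSup_le_sum_of_nonneg hv

lemma integral_le_integral_iSup_pi [Nonempty ι] (hμ : Integrable id μ) (h0 : ∀ᵐ x ∂μ, 0 ≤ x) :
    ∫ x, x ∂μ ≤ ∫ v : ι → ℝ, ⨆ i, v i ∂(Measure.pi fun _ => μ) := by
  let i : ι := Classical.arbitrary ι
  rw [show ∫ x, x ∂μ = ∫ v : ι → ℝ, v i ∂(Measure.pi fun _ => μ) from
    (integral_eval (μ := fun _ : ι => μ) (i := i)).symm]
  exact integral_mono (integrable_eval hμ) (integrable_iSup_pi hμ h0)
    fun v => le_ciSup (Set.finite_range v).bddAbove i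

lemma integral_iSup_pi_le_card_mul (hμ : Integrable id μ) (h0 : ∀ᵐ x ∂μ, 0 ≤ x) :
    ∫ v : ι → ℝ, ⨆ i, v i ∂(Measure.pi fun _ => μ) ≤ Fintype.card ι * ∫ x, x ∂μ := by
  have hsum := integrable_finsetSum (Finset.univ : Finset ι) fun i _ =>
    integrable_eval (μ := fun _ => μ) (i := i) hμ
  calc ∫ v : ι → ℝ, ⨆ i, v i ∂(Measure.pi fun _ => μ)
      ≤ ∫ v : ι → ℝ, ∑ i, v i ∂(Measure.pi fun _ => μ) := by
        refine integral_mono_ae (integrable_iSup_pi hμ h0) hsum ?_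
        filter_upwards [ae_forall_nonneg_pi h0] with v hv using iSup_le_sum_of_nonneg hv
    _ = Fintype.card ι * ∫ x, x ∂μ := by
        rw [integral_finsetSum (f := fun i (v : ι → ℝ) => v i) _ fun i _ => integrable_eval hμ]
        simp [integral_eval]

lemma integral_iSup_pi_le_add [Nonempty ι] (hμ : Integrable id μ) (h0 : ∀ᵐ x ∂μ, 0 ≤ x)
    (c : ℝ) :
    ∫ v : ι → ℝ, ⨆ i, v i ∂(Measure.pi fun _ => μ)
      ≤ c + Fintype.card ι * ∫ x, |x - c| ∂μ := by
  have hdev : Integrable (fun x => |x - c|) μ := (hμ.sub (integrable_const c)).abs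
  have hsum := integrable_finsetSum (Finset.univ : Finset ι) fun i _ =>
    integrable_comp_eval (μ := fun _ => μ) (i := i) hdev
  calc ∫ v : ι → ℝ, ⨆ i, v i ∂(Measure.pi fun _ => μ)
      ≤ ∫ v : ι → ℝ, (c + ∑ i, |v i - c|) ∂(Measure.pi fun _ => μ) :=
        integral_mono (integrable_iSup_pi hμ h0) ((integrable_const c).add hsum)
          fun v => iSup_le_add_sum_abs_sub v c
    _ = c + Fintype.card ι * ∫ x, |x - c| ∂μ := by
        rw [integral_add (integrable_const c) hsum,
          integral_finsetSum (f := fun i (v : ι → ℝ) => |v i - c|) _ fun i _ =>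
            integrable_comp_eval (μ := fun _ : ι => μ) (i := i) hdev]
        simp [integral_comp_eval (μ := fun _ : ι => μ) (f := fun x => |x - c|)
          hdev.aestronglyMeasurable]

lemma card_mul_sub_le_integral_iSup_pi [Nonempty ι] (hμ : Integrable id μ)
    (h0 : ∀ᵐ x ∂μ, 0 ≤ x) (hsqrt : Integrable sqrt μ) :
    Fintype.card ι * ∫ x, x ∂μ - Fintype.card ι * (Fintype.card ι - 1) * (∫ x, √x ∂μ) ^ 2
      ≤ ∫ v : ι → ℝ, ⨆ i, v i ∂(Measure.pi fun _ => μ) := by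
  classical
  have hsum := integrable_finsetSum (Finset.univ : Finset ι) fun i _ =>
    integrable_eval (μ := fun _ => μ) (i := i) hμ
  have hpair : ∀ i, ∀ j ∈ Finset.univ.erase i,
      Integrable (fun v : ι → ℝ => √(v i) * √(v j)) (Measure.pi fun _ => μ) :=
    fun i j hj => integrable_comp_eval_mul_comp_eval_pi hsqrt hsqrt (Finset.ne_of_mem_erase hj).symm
  have hpairs := integrable_finsetSum (Finset.univ : Finset ι) fun i _ =>
    integrable_finsetSum _ (hpair i)
  have hpairE : ∀ i, ∫ v : ι → ℝ, ∑ j ∈ Finset.univ.erase i, √(v i) * √(v j)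
      ∂(Measure.pi fun _ => μ) = (Fintype.card ι - 1) * (∫ x, √x ∂μ) ^ 2 := fun i => by
    rw [integral_finsetSum _ (hpair i), Finset.sum_congr rfl fun j hj =>
      integral_comp_eval_mul_comp_eval_pi hsqrt.aestronglyMeasurable hsqrt.aestronglyMeasurable
        (Finset.ne_of_mem_erase hj).symm, Finset.sum_erase_eq_sub (Finset.mem_univ i)]
    simp [sq, sub_mul]
  calc Fintype.card ι * ∫ x, x ∂μ - Fintype.card ι * (Fintype.card ι - 1) * (∫ x, √x ∂μ) ^ 2
      = ∫ v : ι → ℝ, (∑ i, v i - ∑ i, ∑ j ∈ Finset.univ.erase i, √(v i) * √(v j))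
          ∂(Measure.pi fun _ => μ) := by
        rw [integral_sub hsum hpairs,
          integral_finsetSum (f := fun i (v : ι → ℝ) => v i) _ fun i _ => integrable_eval hμ,
          integral_finsetSum _ fun i _ => integrable_finsetSum _ (hpair i)]
        rw [Finset.sum_congr rfl fun i _ => hpairE i]
        simp [integral_eval, mul_assoc]
    _ ≤ ∫ v : ι → ℝ, ⨆ i, v i ∂(Measure.pi fun _ => μ) := by
        refine integral_mono_ae (hsum.sub hpairs) (integrable_iSup_pi hμ h0) ?_
        filter_upwards [ae_forall_nonneg_pi h0] with v hv
          using sum_sub_sum_sqrt_mul_sqrt_le_iSup hv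

end IIDProduct

lemma tendsto_Gamma_add_half_div_Gamma_sq_div_self :
    Tendsto (fun α : ℝ => (Gamma (α + 1 / 2) / Gamma α) ^ 2 / α) (𝓝[>] 0) (𝓝 0) := by
  have hΓ : ∀ s : ℝ, 0 < s → ContinuousAt Gamma s := fun s hs =>
    (differentiableAt_Gamma fun m => by linarith [(m.cast_nonneg : (0 : ℝ) ≤ m)]).continuousAt
  have hcont : ContinuousAt (fun α : ℝ => α * (Gamma (α + 1 / 2) / Gamma (α + 1)) ^ 2) 0 := by
    have hnum : ContinuousAt (fun α : ℝ => Gamma (α + 1 / 2)) 0 :=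
      ContinuousAt.comp_of_eq (f := fun α : ℝ => α + 1 / 2) (hΓ _ one_half_pos)
        (continuousAt_id.add continuousAt_const) (zero_add _)
    have hden : ContinuousAt (fun α : ℝ => Gamma (α + 1)) 0 :=
      ContinuousAt.comp_of_eq (f := fun α : ℝ => α + 1) (hΓ _ one_pos)
        (continuousAt_id.add continuousAt_const) (zero_add _)
    exact continuousAt_id.mul ((hnum.div hden (by simp)).pow 2)
  have hlim := hcont.tendsto.mono_left (nhdsWithin_le_nhds (s := Ioi 0))
  rw [zero_mul] at hlim
  refine hlim.congr' ?_
  filter_upwards [self_mem_nhdsWithin] with α (hα : 0 < α)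
  rw [Gamma_add_one hα.ne']
  field_simp

section DirichletGeneratorConstant

variable {d : ℕ} {α : ℝ}

lemma dirichletGeneratorConstant_le_card (hα : 0 < α) : dirichletGeneratorConstant d α ≤ d := by
  have := isProbabilityMeasure_gammaMeasure hα one_pos
  have h := integral_iSup_pi_le_card_mul (ι := Fin d) (integrable_id_gammaMeasure hα)
    (ae_nonneg_gammaMeasure α 1)
  rw [integral_id_gammaMeasure hα, Fintype.card_fin] at h
  rw [dirichletGeneratorConstant, one_div α, inv_mul_le_iff₀ hα]
  linarith

variable [NeZero d]

lemma one_le_dirichletGeneratorConstant (hα : 0 < α) : 1 ≤ dirichletGeneratorConstant d α := by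
  have := isProbabilityMeasure_gammaMeasure hα one_pos
  have h := integral_le_integral_iSup_pi (ι := Fin d) (integrable_id_gammaMeasure hα)
    (ae_nonneg_gammaMeasure α 1)
  rw [integral_id_gammaMeasure hα] at h
  rw [dirichletGeneratorConstant, one_div α, le_inv_mul_iff₀ hα]
  linarith

lemma dirichletGeneratorConstant_le_one_add_div_sqrt (hα : 0 < α) :
    dirichletGeneratorConstant d α ≤ 1 + d / √α := by
  have := isProbabilityMeasure_gammaMeasure hα one_pos
  have h := integral_iSup_pi_le_add (ι := Fin d) (integrable_id_gammaMeasure hα)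
    (ae_nonneg_gammaMeasure α 1) α
  rw [Fintype.card_fin] at h
  have hdev := integral_abs_sub_le_sqrt_gammaMeasure hα
  have hs : 0 < √α := sqrt_pos.2 hα
  rw [dirichletGeneratorConstant, one_div α, inv_mul_le_iff₀ hα]
  calc _ ≤ α + d * √α := h.trans (by gcongr)
    _ = α * (1 + d / √α) := by
      field_simp
      linear_combination (d : ℝ) * mul_self_sqrt hα.le

lemma sub_le_dirichletGeneratorConstant (hα : 0 < α) :
    d - d * (d - 1) * ((Gamma (α + 1 / 2) / Gamma α) ^ 2 / α) ≤ dirichletGeneratorConstant d α := by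
  have := isProbabilityMeasure_gammaMeasure hα one_pos
  have h := card_mul_sub_le_integral_iSup_pi (ι := Fin d) (integrable_id_gammaMeasure hα)
    (ae_nonneg_gammaMeasure α 1) (integrable_sqrt_gammaMeasure hα)
  rw [integral_id_gammaMeasure hα, integral_sqrt_gammaMeasure hα, Fintype.card_fin] at h
  rw [dirichletGeneratorConstant, one_div α, le_inv_mul_iff₀ hα]
  calc _ = d * α - d * (d - 1) * (Gamma (α + 1 / 2) / Gamma α) ^ 2 := by field_simp
    _ ≤ _ := h

end DirichletGeneratorConstant

/-- Limits of the Dirichlet generator constant: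
`m(α) → d` as `α → 0⁺` and `m(α) → 1` as `α → ∞`. -/
theorem dirichlet_generator_constant_limits (d : ℕ) (hd : 2 ≤ d) :
    Tendsto (dirichletGeneratorConstant d) (nhdsWithin 0 (Set.Ioi 0))
        (nhds d) ∧
      Tendsto (dirichletGeneratorConstant d) atTop (nhds 1) := by
  have : NeZero d := ⟨by omega⟩
  constructor
  · have hlower : Tendsto
        (fun α : ℝ => (d : ℝ) - d * (d - 1) * ((Gamma (α + 1 / 2) / Gamma α) ^ 2 / α))
        (𝓝[>] 0) (𝓝 (d : ℝ)) := by
      simpa using tendsto_const_nhds.sub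
        (tendsto_const_nhds.mul tendsto_Gamma_add_half_div_Gamma_sq_div_self)
    refine tendsto_of_tendsto_of_tendsto_of_le_of_le' hlower tendsto_const_nhds ?_ ?_ <;>
      filter_upwards [self_mem_nhdsWithin] with α hα
    exacts [sub_le_dirichletGeneratorConstant hα, dirichletGeneratorConstant_le_card hα]
  · have hupper : Tendsto (fun α : ℝ => 1 + d / √α) atTop (𝓝 1) := by
      simpa using tendsto_const_nhds.add (tendsto_const_nhds.div_atTop tendsto_sqrt_atTop)
    refine tendsto_of_tendsto_of_tendsto_of_le_of_le' tendsto_const_nhds hupper ?_ ?_ <;>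
      filter_upwards [eventually_gt_atTop 0] with α hα
    exacts [one_le_dirichletGeneratorConstant hα, dirichletGeneratorConstant_le_one_add_div_sqrt hα]
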